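/- arXiv:2401.03381 — 5 statements merged into one kernel-verified Lean document; each statement's English description precedes it below -/
import Mathlib

section
/- Let n ≥ 1, let Σ be a symmetric positive definite n×n real matrix, let P̂ be a Borel probability measure on ℝⁿ with ∫‖ξ‖ dP̂(ξ) < ∞, let θ ≥ 0, and let c ∈ ℝⁿ with c ≠ 0. Define P* as the pushforward of P̂ under the shift map T(ξ) = ξ + θ·Σc/√(cᵀΣc). Then: (i) the coupling given by the pushforward of P̂ under ξ ↦ (ξ, T(ξ)) has marginals P̂ and P* and satisfies ∫‖ξ₁−ξ₂‖_Σ dQ = θ, so d_W(P*, P̂) ≤ θ; and (ii) E_{P*}[cᵀξ] = E_{P̂}[cᵀξ] + θ·√(cᵀΣc). -/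
/-!
Shifting `P̂` by the constant vector `u = (θ / √(cᵀΣc)) Σc` moves every point by Mahalanobis length
`‖u‖_Σ = θ`, since `uᵀΣ⁻¹u = θ² cᵀΣc / cᵀΣc`. Hence the deterministic coupling `ξ ↦ (ξ, ξ + u)` costs
exactly `θ`, bounding the Wasserstein distance, while the linear functional `cᵀξ` increases by
`cᵀu = θ √(cᵀΣc)`.
-/

open Matrix MeasureTheory

/-- The Mahalanobis norm associated with a positive definite matrix `S`:
`‖x‖_S = √(xᵀ S⁻¹ x)`. -/
noncomputable def mahal {n : ℕ} (S : Matrix (Fin n) (Fin n) ℝ) (x : Fin n → ℝ) : ℝ :=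
  Real.sqrt (x ⬝ᵥ (S⁻¹ *ᵥ x))

/-- Type-1 Wasserstein distance with Mahalanobis ground cost, defined as the infimum of
transport costs over couplings. -/
noncomputable def wassersteinDist {n : ℕ} (S : Matrix (Fin n) (Fin n) ℝ)
    (P1 P2 : Measure (Fin n → ℝ)) : ℝ :=
  sInf {r : ℝ | ∃ Q : Measure ((Fin n → ℝ) × (Fin n → ℝ)),
    IsProbabilityMeasure Q ∧ Q.map Prod.fst = P1 ∧ Q.map Prod.snd = P2 ∧
    r = ∫ q, mahal S (q.1 - q.2) ∂Q}

section Mahalanobis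

variable {n : ℕ} (S : Matrix (Fin n) (Fin n) ℝ)

lemma continuous_mahal : Continuous (mahal S) := by
  unfold mahal
  fun_prop

lemma mahal_neg (x : Fin n → ℝ) : mahal S (-x) = mahal S x := by
  simp only [mahal, mulVec_neg, dotProduct_neg, neg_dotProduct, neg_neg]

lemma mahal_smul_mulVec {S} (hS : IsUnit S) (b : ℝ) (c : Fin n → ℝ) :
    mahal S (b • (S *ᵥ c)) = |b| * Real.sqrt (c ⬝ᵥ (S *ᵥ c)) := by
  have hquad : (b • (S *ᵥ c)) ⬝ᵥ (S⁻¹ *ᵥ (b • (S *ᵥ c))) = b ^ 2 * (c ⬝ᵥ (S *ᵥ c)) := by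
    rw [mulVec_smul, mulVec_mulVec, nonsing_inv_mul S ((isUnit_iff_isUnit_det S).1 hS),
      one_mulVec, smul_dotProduct, dotProduct_smul, dotProduct_comm, smul_eq_mul, smul_eq_mul]
    ring
  rw [mahal, hquad, Real.sqrt_mul (sq_nonneg b), Real.sqrt_sq_eq_abs]

lemma wassersteinDist_le_integral_of_coupling {P₁ P₂ : Measure (Fin n → ℝ)}
    (Q : Measure ((Fin n → ℝ) × (Fin n → ℝ))) [IsProbabilityMeasure Q]
    (h₁ : Q.map Prod.fst = P₁) (h₂ : Q.map Prod.snd = P₂) :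
    wassersteinDist S P₁ P₂ ≤ ∫ q, mahal S (q.1 - q.2) ∂Q := by
  refine csInf_le ⟨0, ?_⟩ ⟨Q, inferInstance, h₁, h₂, rfl⟩
  rintro r ⟨Q', -, -, -, rfl⟩
  exact integral_nonneg fun q => Real.sqrt_nonneg _

lemma integral_mahal_map_prodMk (P : Measure (Fin n → ℝ)) {f g : (Fin n → ℝ) → Fin n → ℝ}
    (hf : Measurable f) (hg : Measurable g) :
    ∫ q, mahal S (q.1 - q.2) ∂P.map (fun ξ => (f ξ, g ξ)) = ∫ ξ, mahal S (f ξ - g ξ) ∂P :=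
  integral_map (hf.prodMk hg).aemeasurable
    ((continuous_mahal S).comp (continuous_fst.sub continuous_snd)).aestronglyMeasurable

lemma wassersteinDist_map_le (P : Measure (Fin n → ℝ)) [IsProbabilityMeasure P]
    {T : (Fin n → ℝ) → Fin n → ℝ} (hT : Measurable T) :
    wassersteinDist S (P.map T) P ≤ ∫ ξ, mahal S (T ξ - ξ) ∂P := by
  have : IsProbabilityMeasure (P.map fun ξ => (T ξ, ξ)) :=
    Measure.isProbabilityMeasure_map (hT.prodMk measurable_id).aemeasurable
  calc wassersteinDist S (P.map T) P
      ≤ ∫ q, mahal S (q.1 - q.2) ∂P.map (fun ξ => (T ξ, ξ)) :=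
        wassersteinDist_le_integral_of_coupling S _ (Measure.fst_map_prodMk measurable_id)
          ((Measure.snd_map_prodMk hT).trans Measure.map_id')
    _ = ∫ ξ, mahal S (T ξ - ξ) ∂P := integral_mahal_map_prodMk S P hT measurable_id

end Mahalanobis

lemma integrable_dotProduct {n : ℕ} {P : Measure (Fin n → ℝ)}
    (hP : Integrable (fun ξ => ‖ξ‖) P) (c : Fin n → ℝ) :
    Integrable (fun ξ => c ⬝ᵥ ξ) P := by
  have hid : Integrable id P := (integrable_norm_iff aestronglyMeasurable_id).1 hP
  exact integrable_finsetSum _ fun i _ => (integrable_pi_iff.1 hid i).const_mul (c i)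

lemma integral_dotProduct_map_add_const {n : ℕ} {P : Measure (Fin n → ℝ)}
    [IsProbabilityMeasure P] (hP : Integrable (fun ξ => ‖ξ‖) P) (c u : Fin n → ℝ) :
    ∫ ξ, c ⬝ᵥ ξ ∂P.map (· + u) = ∫ ξ, c ⬝ᵥ ξ ∂P + c ⬝ᵥ u := by
  rw [integral_map (measurable_add_const u).aemeasurable
    (continuous_const.dotProduct continuous_id').aestronglyMeasurable]
  simp only [dotProduct_add]
  rw [integral_add (integrable_dotProduct hP c) (integrable_const _), integral_const]
  simp

theorem stmt_2_general (n : ℕ) (S : Matrix (Fin n) (Fin n) ℝ)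
    (hpd : S.PosDef)
    (Phat : Measure (Fin n → ℝ)) [IsProbabilityMeasure Phat]
    (hmom : Integrable (fun ξ => ‖ξ‖) Phat)
    (θ : ℝ) (hθ : 0 ≤ θ) (c : Fin n → ℝ) (hc : c ≠ 0)
    (T : (Fin n → ℝ) → (Fin n → ℝ))
    (hT : ∀ ξ, T ξ = ξ + (θ / Real.sqrt (c ⬝ᵥ (S *ᵥ c))) • (S *ᵥ c))
    (Pstar : Measure (Fin n → ℝ)) (hPstar : Pstar = Phat.map T)
    (Q : Measure ((Fin n → ℝ) × (Fin n → ℝ)))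
    (hQ : Q = Phat.map (fun ξ => (ξ, T ξ))) :
    Q.map Prod.fst = Phat ∧
    Q.map Prod.snd = Pstar ∧
    (∫ q, mahal S (q.1 - q.2) ∂Q) = θ ∧
    wassersteinDist S Pstar Phat ≤ θ ∧
    (∫ ξ, c ⬝ᵥ ξ ∂Pstar) = (∫ ξ, c ⬝ᵥ ξ ∂Phat) + θ * Real.sqrt (c ⬝ᵥ (S *ᵥ c)) := by
  set v := c ⬝ᵥ (S *ᵥ c)
  set u := (θ / Real.sqrt v) • (S *ᵥ c)
  have hsv : 0 < Real.sqrt v := Real.sqrt_pos.2 (by simpa using hpd.dotProduct_mulVec_pos hc)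
  obtain rfl : T = (· + u) := funext hT
  have hTmeas : Measurable (· + u) := measurable_add_const u
  have hshift : mahal S u = θ := by
    rw [mahal_smul_mulVec hpd.isUnit, abs_of_nonneg (div_nonneg hθ hsv.le),
      div_mul_cancel₀ θ hsv.ne']
  have hcu : c ⬝ᵥ u = θ * Real.sqrt v := by
    rw [dotProduct_smul, smul_eq_mul, div_mul_eq_mul_div, mul_div_assoc, Real.div_sqrt]
  subst hQ hPstar
  refine ⟨?_, Measure.snd_map_prodMk measurable_id, ?_, ?_, ?_⟩
  · rw [← Measure.fst, Measure.fst_map_prodMk hTmeas, Measure.map_id']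
  · refine (integral_mahal_map_prodMk S Phat measurable_id' hTmeas).trans ?_
    simp [sub_add_cancel_left, mahal_neg, hshift]
  · simpa [hshift] using wassersteinDist_map_le S Phat hTmeas
  · rw [integral_dotProduct_map_add_const hmom, hcu]

/-- The shifted distribution `P* = P̂ ∘ T⁻¹` with `T(ξ) = ξ + θ·Σc/√(cᵀΣc)`
is within Wasserstein distance `θ` of `P̂` (the graph coupling has marginals `P̂`, `P*` and
cost exactly `θ`), and `E_{P*}[cᵀξ] = E_{P̂}[cᵀξ] + θ·√(cᵀΣc)`. -/
theorem stmt_2 (n : ℕ) (hn : 1 ≤ n) (S : Matrix (Fin n) (Fin n) ℝ)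
    (hsymm : S.IsSymm) (hpd : S.PosDef)
    (Phat : Measure (Fin n → ℝ)) [IsProbabilityMeasure Phat]
    (hmom : Integrable (fun ξ => ‖ξ‖) Phat)
    (θ : ℝ) (hθ : 0 ≤ θ) (c : Fin n → ℝ) (hc : c ≠ 0)
    (T : (Fin n → ℝ) → (Fin n → ℝ))
    (hT : ∀ ξ, T ξ = ξ + (θ / Real.sqrt (c ⬝ᵥ (S *ᵥ c))) • (S *ᵥ c))
    (Pstar : Measure (Fin n → ℝ)) (hPstar : Pstar = Phat.map T)
    (Q : Measure ((Fin n → ℝ) × (Fin n → ℝ)))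
    (hQ : Q = Phat.map (fun ξ => (ξ, T ξ))) :
    Q.map Prod.fst = Phat ∧
    Q.map Prod.snd = Pstar ∧
    (∫ q, mahal S (q.1 - q.2) ∂Q) = θ ∧
    wassersteinDist S Pstar Phat ≤ θ ∧
    (∫ ξ, c ⬝ᵥ ξ ∂Pstar) = (∫ ξ, c ⬝ᵥ ξ ∂Phat) + θ * Real.sqrt (c ⬝ᵥ (S *ᵥ c)) :=
  stmt_2_general n S hpd Phat hmom θ hθ c hc T hT Pstar hPstar Q hQ
end

section
/- (Exactness of the big-M reformulation of the conditional maximum-frequency-deviation constraints) Let T_DB, T_G, T_E, H, Δf^max be positive reals, let p ∈ ℝ, let R_GU, R_GD, R_EU, R_ED ≥ 0, and let M > 0 satisfy: M ≥ |p|, M ≥ (R_EU + R_GU·T_DB/T_G) + (R_ED + R_GD·T_DB/T_G), M ≥ (R_GU + R_GD)/T_G, and M ≥ (R_EU + R_ED)·T_E. Then there exist u ∈ {0,1} and reals x, y, z satisfying the system: (i) −M(1−u) ≤ p ≤ M·u; (ii) |z − R_EU + R_GU·T_DB/T_G| ≤ M(1−u); (iii) |z + R_ED − R_GD·T_DB/T_G|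 ≤ M·u; (iv) |y − R_GU/T_G| ≤ M(1−u); (v) |y − R_GD/T_G| ≤ M·u; (vi) |x − (4·Δf^max·H − R_EU·T_E)| ≤ M(1−u); (vii) |x − (4·Δf^max·H − R_ED·T_E)| ≤ M·u; (viii) (p − z)² ≤ x·y; if and only if at least one of the following holds: (a) p ≥ 0 and (p − R_EU + R_GU·T_DB/T_G)² ≤ (4·Δf^max·H − R_EU·T_E)·R_GU/T_G, or (b) p ≤ 0 and (p + R_ED − R_GD·T_DB/T_G)² ≤ (4·Δf^max·H − R_ED·T_E)·R_GD/T_G. -/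
/-- Exactness of the big-M reformulation of the conditional
maximum-frequency-deviation constraints. -/
theorem stmt_7 (T_DB T_G T_E H Δfmax : ℝ)
    (hTDB : 0 < T_DB) (hTG : 0 < T_G) (hTE : 0 < T_E) (hH : 0 < H) (hΔf : 0 < Δfmax)
    (p : ℝ) (R_GU R_GD R_EU R_ED : ℝ)
    (hGU : 0 ≤ R_GU) (hGD : 0 ≤ R_GD) (hEU : 0 ≤ R_EU) (hED : 0 ≤ R_ED)
    (M : ℝ) (hM : 0 < M)
    (hM1 : |p| ≤ M)
    (hM2 : (R_EU + R_GU * T_DB / T_G) + (R_ED + R_GD * T_DB / T_G) ≤ M)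
    (hM3 : (R_GU + R_GD) / T_G ≤ M)
    (hM4 : (R_EU + R_ED) * T_E ≤ M) :
    (∃ u x y z : ℝ, (u = 0 ∨ u = 1) ∧
        (-(M * (1 - u)) ≤ p ∧ p ≤ M * u) ∧
        |z - R_EU + R_GU * T_DB / T_G| ≤ M * (1 - u) ∧
        |z + R_ED - R_GD * T_DB / T_G| ≤ M * u ∧
        |y - R_GU / T_G| ≤ M * (1 - u) ∧
        |y - R_GD / T_G| ≤ M * u ∧
        |x - (4 * Δfmax * H - R_EU * T_E)| ≤ M * (1 - u) ∧
        |x - (4 * Δfmax * H - R_ED * T_E)| ≤ M * u ∧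
        (p - z) ^ 2 ≤ x * y) ↔
    ((0 ≤ p ∧ (p - R_EU + R_GU * T_DB / T_G) ^ 2
          ≤ (4 * Δfmax * H - R_EU * T_E) * R_GU / T_G) ∨
     (p ≤ 0 ∧ (p + R_ED - R_GD * T_DB / T_G) ^ 2
          ≤ (4 * Δfmax * H - R_ED * T_E) * R_GD / T_G)) := by
  have habs := abs_le.mp hM1
  have hq1 : 0 ≤ R_GU * T_DB / T_G := by positivity
  have hq2 : 0 ≤ R_GD * T_DB / T_G := by positivity
  have hq3 : 0 ≤ R_GU / T_G := by positivity
  have hq4 : 0 ≤ R_GD / T_G := by positivity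
  have hq5 : 0 ≤ R_EU * T_E := by positivity
  have hq6 : 0 ≤ R_ED * T_E := by positivity
  constructor
  · rintro ⟨u, x, y, z, hu | hu, ⟨hp1, hp2⟩, h1, h2, h3, h4, h5, h6, h7⟩ <;> subst hu
    · -- u = 0 : case (b)
      right
      have hz : z + R_ED - R_GD * T_DB / T_G = 0 := by
        have := abs_nonpos_iff.mp (by linarith [h2] : |z + R_ED - R_GD * T_DB / T_G| ≤ 0)
        linarith
      have hy : y - R_GD / T_G = 0 := by
        have := abs_nonpos_iff.mp (by linarith [h4] : |y - R_GD / T_G| ≤ 0)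
        linarith
      have hx : x - (4 * Δfmax * H - R_ED * T_E) = 0 := by
        have := abs_nonpos_iff.mp (by linarith [h6] : |x - (4 * Δfmax * H - R_ED * T_E)| ≤ 0)
        linarith
      constructor
      · linarith
      · have e1 : (p - z) ^ 2 = (p + R_ED - R_GD * T_DB / T_G) ^ 2 := by
          have : z = R_GD * T_DB / T_G - R_ED := by linarith
          rw [this]; ring
        have e2 : x * y = (4 * Δfmax * H - R_ED * T_E) * R_GD / T_G := by
          have hx' : x = 4 * Δfmax * H - R_ED * T_E := by linarith
          have hy' : y = R_GD / T_G := by linarith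
          rw [hx', hy']; ring
        linarith [h7, e1.symm ▸ h7]
    · -- u = 1 : case (a)
      left
      have hz : z - R_EU + R_GU * T_DB / T_G = 0 := by
        have := abs_nonpos_iff.mp
          (by linarith [h1] : |z - R_EU + R_GU * T_DB / T_G| ≤ 0)
        linarith
      have hy : y - R_GU / T_G = 0 := by
        have := abs_nonpos_iff.mp (by linarith [h3] : |y - R_GU / T_G| ≤ 0)
        linarith
      have hx : x - (4 * Δfmax * H - R_EU * T_E) = 0 := by
        have := abs_nonpos_iff.mp (by linarith [h5] : |x - (4 * Δfmax * H - R_EU * T_E)| ≤ 0)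
        linarith
      constructor
      · linarith
      · have e1 : (p - z) ^ 2 = (p - R_EU + R_GU * T_DB / T_G) ^ 2 := by
          have : z = R_EU - R_GU * T_DB / T_G := by linarith
          rw [this]; ring
        have e2 : x * y = (4 * Δfmax * H - R_EU * T_E) * R_GU / T_G := by
          have hx' : x = 4 * Δfmax * H - R_EU * T_E := by linarith
          have hy' : y = R_GU / T_G := by linarith
          rw [hx', hy']; ring
        linarith [h7]
  · rintro (⟨hp, hc⟩ | ⟨hp, hc⟩)
    · refine ⟨1, 4 * Δfmax * H - R_EU * T_E, R_GU / T_G, R_EU - R_GU * T_DB / T_G,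
        Or.inr rfl, ⟨by linarith, by linarith⟩, ?_, ?_, ?_, ?_, ?_, ?_, ?_⟩
      · rw [abs_le]; exact ⟨by linarith, by linarith⟩
      · rw [abs_le]; exact ⟨by linarith, by linarith⟩
      · rw [abs_le]; exact ⟨by linarith, by linarith⟩
      · rw [abs_le, add_div] at *; exact ⟨by linarith, by linarith⟩
      · rw [abs_le]; exact ⟨by linarith, by linarith⟩
      · rw [abs_le]; exact ⟨by linarith, by linarith⟩
      · have e1 : (p - (R_EU - R_GU * T_DB / T_G)) ^ 2
            = (p - R_EU + R_GU * T_DB / T_G) ^ 2 := by ring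
        have e2 : (4 * Δfmax * H - R_EU * T_E) * (R_GU / T_G)
            = (4 * Δfmax * H - R_EU * T_E) * R_GU / T_G := by ring
        rw [e1, e2]; exact hc
    · refine ⟨0, 4 * Δfmax * H - R_ED * T_E, R_GD / T_G, R_GD * T_DB / T_G - R_ED,
        Or.inl rfl, ⟨by linarith, by linarith⟩, ?_, ?_, ?_, ?_, ?_, ?_, ?_⟩
      · rw [abs_le]; exact ⟨by linarith, by linarith⟩
      · rw [abs_le]; exact ⟨by linarith, by linarith⟩
      · rw [abs_le, add_div] at *; exact ⟨by linarith, by linarith⟩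
      · rw [abs_le]; exact ⟨by linarith, by linarith⟩
      · rw [abs_le]; exact ⟨by linarith, by linarith⟩
      · rw [abs_le]; exact ⟨by linarith, by linarith⟩
      · have e1 : (p - (R_GD * T_DB / T_G - R_ED)) ^ 2
            = (p + R_ED - R_GD * T_DB / T_G) ^ 2 := by ring
        have e2 : (4 * Δfmax * H - R_ED * T_E) * (R_GD / T_G)
            = (4 * Δfmax * H - R_ED * T_E) * R_GD / T_G := by ring
        rw [e1, e2]; exact hc
end

section
/- Let Φ(η) := ∫_{−∞}^{η} (1/√(2π))·e^{−z²/2} dz be the standard normal CDF, let ε ∈ (0, 1/2), let a := Φ⁻¹(1−ε), let θ > 0, and define F(η) := η·(Φ(η) − (1−ε)) − ∫_{a²/2}^{η²/2} (1/√(2π))·e^{−z} dz − θ for η ≥ a. Then F(a) = −θ < 0, F(η) → +∞ as η → +∞, and there exists a unique η* ∈ [a, ∞) with F(η*) = 0; moreover η* > a, so the adjusted level ε′ := 1 − Φ(η*) satisfies 0 < ε′ < ε. -/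
/-!
The derivative of `F` is `Φ(η) − (1 − ε)`. It is positive on `(a, ∞)` because `Φ` is strictly
increasing with `Φ(a) = 1 − ε`, and it is eventually at least `ε / 2` because `Φ → 1`, so `F`
is strictly increasing on `[a, ∞)` and grows at least linearly. Together with `F(a) = −θ < 0`
the intermediate value theorem gives the unique root `η*`; it is not `a`, hence
`1 − ε < Φ(η*) < 1`.

`Φ` is identified with the cdf of `gaussianReal 0 1`, which supplies `Φ ≤ 1` and `Φ → 1`.
-/

open MeasureTheory intervalIntegral

/-- The standard normal cumulative distribution function. -/
noncomputable def Phi (η : ℝ) : ℝ :=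
  ∫ z in Set.Iic η, (1 / Real.sqrt (2 * Real.pi)) * Real.exp (-z ^ 2 / 2)

open ProbabilityTheory Filter Set Topology Real

theorem hasDerivAt_setIntegral_Iic {E : Type*} [NormedAddCommGroup E] [NormedSpace ℝ E]
    [CompleteSpace E] {f : ℝ → E} (hf : Integrable f) (hf_cont : Continuous f) (x : ℝ) :
    HasDerivAt (fun y => ∫ t in Iic y, f t) (f x) x := by
  have hsplit :
      (fun y => ∫ t in Iic y, f t) = fun y => (∫ t in Iic x, f t) + ∫ t in x..y, f t :=
    funext fun y => by rw [← integral_Iic_sub_Iic hf.integrableOn hf.integrableOn]; abel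
  rw [hsplit]
  exact (integral_hasDerivAt_right hf.intervalIntegrable
    hf_cont.aestronglyMeasurable.stronglyMeasurableAtFilter hf_cont.continuousAt).const_add _

theorem tendsto_atTop_of_hasDerivAt_of_eventually_ge {f f' : ℝ → ℝ} {c : ℝ} (hc : 0 < c)
    (hf : ∀ x, HasDerivAt f (f' x) x) (hf' : ∀ᶠ x in atTop, c ≤ f' x) :
    Tendsto f atTop atTop := by
  obtain ⟨b, hb⟩ := eventually_atTop.1 hf'
  have hlinear : ∀ x ∈ Ici b, f b + c * (x - b) ≤ f x := by
    intro x hx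
    have := (convex_Ici b).mul_sub_le_image_sub_of_le_deriv
      (fun y _ => (hf y).continuousAt.continuousWithinAt)
      (fun y _ => (hf y).differentiableAt.differentiableWithinAt)
      (fun y hy => by rw [interior_Ici] at hy; rw [(hf y).deriv]; exact hb y hy.le)
      b self_mem_Ici x hx hx
    linarith
  refine tendsto_atTop_mono' _ (eventually_ge_atTop b |>.mono hlinear) ?_
  exact tendsto_atTop_add_const_left _ _
    ((tendsto_atTop_add_const_right _ (-b) tendsto_id).const_mul_atTop hc)

theorem existsUnique_eq_zero_of_strictMonoOn_Ici {f : ℝ → ℝ} {a : ℝ}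
    (hf : ContinuousOn f (Ici a)) (hmono : StrictMonoOn f (Ici a)) (ha : f a < 0)
    (htop : Tendsto f atTop atTop) : ∃! x, x ∈ Ici a ∧ f x = 0 := by
  obtain ⟨b, hb_pos, hab⟩ := ((htop.eventually_gt_atTop 0).and (eventually_ge_atTop a)).exists
  obtain ⟨x, hx, hfx⟩ := intermediate_value_Icc hab (hf.mono Icc_subset_Ici_self)
    ⟨ha.le, hb_pos.le⟩
  exact ⟨x, ⟨hx.1, hfx⟩, fun y ⟨hy, hfy⟩ => hmono.injOn hy hx.1 (hfy.trans hfx.symm)⟩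

theorem gaussianPDFReal_zero_one (z : ℝ) :
    gaussianPDFReal 0 1 z = 1 / √(2 * π) * exp (-z ^ 2 / 2) := by
  simp [gaussianPDFReal]

theorem Phi_eq_setIntegral_gaussianPDFReal (x : ℝ) :
    Phi x = ∫ z in Iic x, gaussianPDFReal 0 1 z := by
  simp only [gaussianPDFReal_zero_one, Phi]

theorem Phi_eq_cdf : Phi = cdf (gaussianReal 0 1) := by
  ext x
  rw [cdf_eq_real, measureReal_def, gaussianReal_apply_eq_integral _ one_ne_zero,
    ENNReal.toReal_ofReal (setIntegral_nonneg measurableSet_Iic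
      fun z _ => gaussianPDFReal_nonneg 0 1 z),
    Phi_eq_setIntegral_gaussianPDFReal]

theorem hasDerivAt_Phi (x : ℝ) : HasDerivAt Phi (gaussianPDFReal 0 1 x) x := by
  have hcont : Continuous (gaussianPDFReal 0 1) := by
    rw [funext gaussianPDFReal_zero_one]; fun_prop
  rw [funext Phi_eq_setIntegral_gaussianPDFReal]
  exact hasDerivAt_setIntegral_Iic (integrable_gaussianPDFReal 0 1) hcont x

theorem strictMono_Phi : StrictMono Phi :=
  strictMono_of_hasDerivAt_pos hasDerivAt_Phi fun x => gaussianPDFReal_pos 0 1 x one_ne_zero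

theorem tendsto_Phi_atTop : Tendsto Phi atTop (𝓝 1) :=
  Phi_eq_cdf ▸ tendsto_cdf_atTop _

theorem Phi_lt_one (x : ℝ) : Phi x < 1 :=
  (strictMono_Phi (lt_add_one x)).trans_le (Phi_eq_cdf ▸ cdf_le_one _ _)

noncomputable def wassersteinF (p a θ η : ℝ) : ℝ :=
  η * (Phi η - p) - (∫ z in (a ^ 2 / 2)..(η ^ 2 / 2), 1 / √(2 * π) * exp (-z)) - θ

section wassersteinF

variable {p a θ : ℝ}

theorem wassersteinF_self (hp : Phi a = p) : wassersteinF p a θ a = -θ := by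
  simp [wassersteinF, hp]

/-- The two `η φ(η)` terms cancel: one from the product rule, one from the chain rule at the
upper limit `η² / 2` of the integral. -/
theorem hasDerivAt_wassersteinF (η : ℝ) : HasDerivAt (wassersteinF p a θ) (Phi η - p) η := by
  have hcont : Continuous fun z : ℝ => 1 / √(2 * π) * exp (-z) := by fun_prop
  have hupper : HasDerivAt (fun η : ℝ => η ^ 2 / 2) η η := by
    simpa using (hasDerivAt_pow 2 η).div_const 2
  have hint := (integral_hasDerivAt_right (hcont.intervalIntegrable (a ^ 2 / 2) (η ^ 2 / 2))
    hcont.aestronglyMeasurable.stronglyMeasurableAtFilter hcont.continuousAt).comp η hupper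
  have hprod : HasDerivAt (fun η => η * (Phi η - p))
      (1 * (Phi η - p) + η * gaussianPDFReal 0 1 η) η :=
    (hasDerivAt_id η).mul ((hasDerivAt_Phi η).sub_const p)
  refine ((hprod.sub hint).sub_const θ).congr_deriv ?_
  rw [gaussianPDFReal_zero_one, neg_div]
  ring

theorem strictMonoOn_wassersteinF (hp : p ≤ Phi a) : StrictMonoOn (wassersteinF p a θ) (Ici a) :=
  strictMonoOn_of_hasDerivWithinAt_pos (convex_Ici a)
    (fun x _ => (hasDerivAt_wassersteinF x).continuousAt.continuousWithinAt)
    (fun x _ => (hasDerivAt_wassersteinF x).hasDerivWithinAt)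
    fun x hx => by
      rw [interior_Ici] at hx
      linarith [strictMono_Phi hx]

theorem tendsto_wassersteinF_atTop (hp : p < 1) : Tendsto (wassersteinF p a θ) atTop atTop := by
  have hgap : 0 < (1 - p) / 2 := by linarith
  refine tendsto_atTop_of_hasDerivAt_of_eventually_ge hgap hasDerivAt_wassersteinF ?_
  have hmid : (1 + p) / 2 < 1 := by linarith
  filter_upwards [tendsto_Phi_atTop.eventually (eventually_gt_nhds hmid)] with x hx
  linarith

end wassersteinF

/-- for `θ > 0`, the function
`F(η) = η(Φ(η) − (1−ε)) − ∫_{a²/2}^{η²/2} (1/√(2π))e^{−z} dz − θ` with `a = Φ⁻¹(1−ε)`,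
`ε ∈ (0,1/2)`, satisfies `F(a) = −θ < 0`, `F(η) → +∞` as `η → +∞`, has a unique root
`η* ∈ [a,∞)`; moreover any such root satisfies `η* > a`, so `ε′ = 1 − Φ(η*)` satisfies
`0 < ε′ < ε`. -/
theorem stmt_9 (ε θ a : ℝ) (hε : ε ∈ Set.Ioo (0:ℝ) (1/2)) (ha : Phi a = 1 - ε)
    (hθ : 0 < θ)
    (F : ℝ → ℝ)
    (hF : ∀ η, F η = η * (Phi η - (1 - ε))
        - (∫ z in (a ^ 2 / 2)..(η ^ 2 / 2), (1 / Real.sqrt (2 * Real.pi)) * Real.exp (-z)) - θ) :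
    (F a = -θ ∧ F a < 0) ∧
    Filter.Tendsto F Filter.atTop Filter.atTop ∧
    (∃! η : ℝ, η ∈ Set.Ici a ∧ F η = 0) ∧
    (∀ η, a ≤ η → F η = 0 → a < η ∧ 0 < 1 - Phi η ∧ 1 - Phi η < ε) := by
  obtain rfl : F = wassersteinF (1 - ε) a θ := funext hF
  have hFa : wassersteinF (1 - ε) a θ a = -θ := wassersteinF_self ha
  have hmono := strictMonoOn_wassersteinF (θ := θ) ha.ge
  have htop := tendsto_wassersteinF_atTop (a := a) (θ := θ) (by linarith [hε.1] : 1 - ε < 1)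
  refine ⟨⟨hFa, by linarith⟩, htop, existsUnique_eq_zero_of_strictMonoOn_Ici
    (fun x _ => (hasDerivAt_wassersteinF x).continuousAt.continuousWithinAt) hmono
    (by linarith) htop, fun η hη hroot => ?_⟩
  have haη : a < η := hη.lt_of_ne (by rintro rfl; linarith)
  have hPhi := strictMono_Phi haη
  exact ⟨haη, by linarith [Phi_lt_one η], by linarith⟩
end

section
/- (Frequency nadir under the linear ramping PFR model) Let H, T_DB, T_G, T_E > 0 with T_G > T_E, let R_G > 0, R_E ≥ 0, and let p be the post-islanding power imbalance with R_E ≤ p ≤ R_E + R_G. Define the aggregate primary frequency response ΔP(τ) := ΔP_G(τ) + ΔP_E(τ), where ΔP_G(τ) = 0 for 0 ≤ τ < T_DB, ΔP_G(τ) = R_G·(τ − T_DB)/T_G for T_DB ≤ τ < T_G + T_DB, and ΔP_G(τ) = R_G for τ ≥ T_G + T_DB; and ΔP_E(τ) = R_E·τ/T_E for 0 ≤ τ < T_E and ΔP_E(τ) = R_E for τ ≥ T_E. Define the frequency deviation Δf(τ) := (1/(2H))·∫₀^τ (ΔP(s) − p) ds, and let τ* := T_DB + (p − R_E)·T_G/R_G.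 Assume T_E ≤ τ* (so τ* ∈ [T_E, T_G + T_DB]). Then: (i) Δf attains its minimum over [0, ∞) at τ = τ*; and (ii) Δf(τ*) = −(1/(2H))·[ (p − R_E)²·T_G/(2·R_G) + (p − R_E)·T_DB + R_E·T_E/2 ]. -/
open intervalIntegral

/-!
The response `ΔP` is a sum of two nondecreasing ramps and reaches the imbalance `p` exactly at
`τ*`, so the integrand `ΔP - p` of `Δf` is `≤ 0` before `τ*` and `≥ 0` after it; hence
`τ ↦ ∫₀^τ (ΔP - p)` is minimal at `τ*`. The nadir value is the integral of the two ramps,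
computed piece by piece.
-/

noncomputable section

/-- `delayedRamp R_G T_DB T_G` is the paper's `ΔP_G` and `saturatingRamp R_E T_E` its `ΔP_E`. -/
def delayedRamp (R D T τ : ℝ) : ℝ :=
  if τ < D then 0 else if τ < T + D then R * (τ - D) / T else R

def saturatingRamp (R T τ : ℝ) : ℝ :=
  if τ < T then R * τ / T else R

end

section Ramps

variable {R D T : ℝ}

theorem delayedRamp_eq_mul_max_min (hT : 0 < T) (τ : ℝ) :
    delayedRamp R D T τ = R / T * max 0 (min (τ - D) T) := by
  unfold delayedRamp
  split_ifs with h₁ h₂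
  · rw [min_eq_left (by linarith), max_eq_left (by linarith), mul_zero]
  · rw [min_eq_left (by linarith), max_eq_right (by linarith)]; ring
  · rw [min_eq_right (by linarith), max_eq_right hT.le]; field_simp

theorem delayedRamp_eq_zero_of_le (hT : 0 < T) {τ : ℝ} (hτ : τ ≤ D) :
    delayedRamp R D T τ = 0 := by
  rw [delayedRamp_eq_mul_max_min hT, min_eq_left (by linarith), max_eq_left (by linarith),
    mul_zero]

theorem delayedRamp_eq_of_mem_Icc (hT : 0 < T) {τ : ℝ} (hτ : τ ∈ Set.Icc D (T + D)) :
    delayedRamp R D T τ = R * (τ - D) / T := by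
  rw [delayedRamp_eq_mul_max_min hT, min_eq_left (by linarith [hτ.2]),
    max_eq_right (by linarith [hτ.1])]
  ring

theorem monotone_delayedRamp (hR : 0 ≤ R) (hT : 0 < T) : Monotone (delayedRamp R D T) := by
  intro a b hab
  simp only [delayedRamp_eq_mul_max_min hT]
  gcongr

theorem continuous_delayedRamp (hT : 0 < T) : Continuous (delayedRamp R D T) := by
  simp only [funext (delayedRamp_eq_mul_max_min (R := R) (D := D) hT)]
  fun_prop

theorem integral_delayedRamp (hT : 0 < T) (hD : 0 ≤ D) {t : ℝ} (ht : t ∈ Set.Icc D (T + D)) :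
    ∫ s in (0 : ℝ)..t, delayedRamp R D T s = R * (t - D) ^ 2 / (2 * T) := by
  have hint (a b : ℝ) : IntervalIntegrable (delayedRamp R D T) MeasureTheory.volume a b :=
    (continuous_delayedRamp hT).intervalIntegrable a b
  have h₀ : ∫ s in (0 : ℝ)..D, delayedRamp R D T s = 0 := by
    rw [integral_congr (g := fun _ => (0:ℝ)), integral_zero]
    intro s hs
    rw [Set.uIcc_of_le hD] at hs
    exact delayedRamp_eq_zero_of_le hT hs.2
  have h₁ : ∫ s in D..t, delayedRamp R D T s = ∫ s in D..t, R * (s - D) / T := by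
    refine integral_congr fun s hs => ?_
    rw [Set.uIcc_of_le ht.1] at hs
    exact delayedRamp_eq_of_mem_Icc hT ⟨hs.1, hs.2.trans ht.2⟩
  rw [← integral_add_adjacent_intervals (hint 0 D) (hint D t), h₀, h₁, zero_add,
    integral_comp_sub_right (fun s => R * s / T), integral_div, integral_const_mul, integral_id]
  field_simp
  ring

theorem saturatingRamp_eq_mul_min (hT : 0 < T) (τ : ℝ) :
    saturatingRamp R T τ = R / T * min τ T := by
  unfold saturatingRamp
  split_ifs with h
  · rw [min_eq_left h.le]; ring
  · rw [min_eq_right (not_lt.1 h)]; field_simp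

theorem saturatingRamp_eq_of_le {τ : ℝ} (hT : T ≤ τ) : saturatingRamp R T τ = R :=
  if_neg hT.not_gt

theorem monotone_saturatingRamp (hR : 0 ≤ R) (hT : 0 < T) : Monotone (saturatingRamp R T) := by
  intro a b hab
  simp only [saturatingRamp_eq_mul_min hT]
  gcongr

theorem continuous_saturatingRamp (hT : 0 < T) : Continuous (saturatingRamp R T) := by
  simp only [funext (saturatingRamp_eq_mul_min (R := R) hT)]
  fun_prop

theorem integral_saturatingRamp (hT : 0 < T) {t : ℝ} (ht : T ≤ t) :
    ∫ s in (0 : ℝ)..t, saturatingRamp R T s = R * (t - T / 2) := by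
  have hint (a b : ℝ) : IntervalIntegrable (saturatingRamp R T) MeasureTheory.volume a b :=
    (continuous_saturatingRamp hT).intervalIntegrable a b
  have h₀ : ∫ s in (0 : ℝ)..T, saturatingRamp R T s = ∫ s in (0 : ℝ)..T, R / T * s := by
    refine integral_congr fun s hs => ?_
    rw [Set.uIcc_of_le hT.le] at hs
    rw [saturatingRamp_eq_mul_min hT, min_eq_left hs.2]
  have h₁ : ∫ s in T..t, saturatingRamp R T s = ∫ s in T..t, R := by
    refine integral_congr fun s hs => ?_
    rw [Set.uIcc_of_le ht] at hs
    exact saturatingRamp_eq_of_le hs.1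
  rw [← integral_add_adjacent_intervals (hint 0 T) (hint T t), h₀, h₁, integral_const_mul,
    integral_id, integral_const, smul_eq_mul]
  field_simp
  ring

end Ramps

theorem integral_le_integral_of_monotone_of_eq_zero {g : ℝ → ℝ} (hg : Monotone g) {c : ℝ}
    (hc : g c = 0) (a b : ℝ) : ∫ s in a..c, g s ≤ ∫ s in a..b, g s := by
  have hint (x y : ℝ) : IntervalIntegrable g MeasureTheory.volume x y := hg.intervalIntegrable
  rw [← integral_add_adjacent_intervals (hint a c) (hint c b), le_add_iff_nonneg_right]
  rcases le_total c b with hcb | hbc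
  · exact integral_nonneg hcb fun s hs => hc ▸ hg hs.1
  · rw [integral_symm, neg_nonneg, ← integral_zero]
    exact integral_mono_on hbc (hint b c) intervalIntegrable_const fun s hs => hc ▸ hg hs.2

theorem stmt_11_general (H T_DB T_G T_E R_G R_E p : ℝ)
    (hH : 0 < H) (hTDB : 0 < T_DB) (hTG : 0 < T_G) (hTE : 0 < T_E)
    (hRG : 0 < R_G) (hRE : 0 ≤ R_E) (hp1 : R_E ≤ p) (hp2 : p ≤ R_E + R_G)
    (ΔP : ℝ → ℝ)
    (hΔP : ∀ τ, ΔP τ =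
      (if τ < T_DB then 0
       else if τ < T_G + T_DB then R_G * (τ - T_DB) / T_G
       else R_G)
      + (if τ < T_E then R_E * τ / T_E else R_E))
    (Δf : ℝ → ℝ)
    (hΔf : ∀ τ, Δf τ = (1 / (2 * H)) * ∫ s in (0:ℝ)..τ, (ΔP s - p))
    (τstar : ℝ) (hτstar : τstar = T_DB + (p - R_E) * T_G / R_G)
    (hnadir : T_E ≤ τstar) :
    (∀ τ ∈ Set.Ici (0:ℝ), Δf τstar ≤ Δf τ) ∧
    Δf τstar = -(1 / (2 * H)) *
      ((p - R_E) ^ 2 * T_G / (2 * R_G) + (p - R_E) * T_DB + R_E * T_E / 2) := by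
  have hΔP_ramps : ∀ τ, ΔP τ = delayedRamp R_G T_DB T_G τ + saturatingRamp R_E T_E τ := hΔP
  have hτstar_mem : τstar ∈ Set.Icc T_DB (T_G + T_DB) := by
    have h₀ : 0 ≤ (p - R_E) * T_G / R_G := div_nonneg (mul_nonneg (by linarith) hTG.le) hRG.le
    have h₁ : (p - R_E) * T_G / R_G ≤ T_G := by rw [div_le_iff₀ hRG]; nlinarith
    rw [hτstar]
    constructor <;> linarith
  have hramp : R_G * (τstar - T_DB) / T_G = p - R_E := by
    rw [hτstar]; field_simp; ring
  have hmono : Monotone fun s => ΔP s - p := by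
    intro a b hab
    simp only [hΔP_ramps]
    exact sub_le_sub_right
      (add_le_add (monotone_delayedRamp hRG.le hTG hab) (monotone_saturatingRamp hRE hTE hab)) p
  have hbalance : ΔP τstar - p = 0 := by
    rw [hΔP_ramps, delayedRamp_eq_of_mem_Icc hTG hτstar_mem, hramp,
      saturatingRamp_eq_of_le hnadir]
    ring
  have hintegral : ∫ s in (0:ℝ)..τstar, (ΔP s - p) =
      R_G * (τstar - T_DB) ^ 2 / (2 * T_G) + R_E * (τstar - T_E / 2) - p * τstar := by
    have hcont : Continuous fun s => delayedRamp R_G T_DB T_G s + saturatingRamp R_E T_E s :=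
      (continuous_delayedRamp hTG).add (continuous_saturatingRamp hTE)
    simp only [hΔP_ramps]
    rw [integral_sub (hcont.intervalIntegrable _ _) intervalIntegrable_const,
      integral_add ((continuous_delayedRamp hTG).intervalIntegrable _ _)
        ((continuous_saturatingRamp hTE).intervalIntegrable _ _),
      integral_delayedRamp hTG hTDB.le hτstar_mem, integral_saturatingRamp hTE hnadir,
      integral_const, smul_eq_mul, sub_zero, mul_comm τstar p]
  refine ⟨fun τ _ => ?_, ?_⟩
  · rw [hΔf, hΔf]
    exact mul_le_mul_of_nonneg_left
      (integral_le_integral_of_monotone_of_eq_zero hmono hbalance 0 τ) (by positivity)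
  · rw [hΔf, hintegral, hτstar]
    field_simp
    ring

/-- Frequency nadir under the linear ramping PFR model: under the linear
ramping model of primary frequency response, with `R_E ≤ p ≤ R_E + R_G` and
`T_E ≤ τ* = T_DB + (p − R_E)·T_G/R_G`, the frequency deviation attains its minimum over
`[0,∞)` at `τ*`, with value
`−(1/(2H))·[(p−R_E)²·T_G/(2R_G) + (p−R_E)·T_DB + R_E·T_E/2]`. -/
theorem stmt_11 (H T_DB T_G T_E R_G R_E p : ℝ)
    (hH : 0 < H) (hTDB : 0 < T_DB) (hTG : 0 < T_G) (hTE : 0 < T_E) (hTGE : T_E < T_G)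
    (hRG : 0 < R_G) (hRE : 0 ≤ R_E) (hp1 : R_E ≤ p) (hp2 : p ≤ R_E + R_G)
    (ΔP : ℝ → ℝ)
    (hΔP : ∀ τ, ΔP τ =
      (if τ < T_DB then 0
       else if τ < T_G + T_DB then R_G * (τ - T_DB) / T_G
       else R_G)
      + (if τ < T_E then R_E * τ / T_E else R_E))
    (Δf : ℝ → ℝ)
    (hΔf : ∀ τ, Δf τ = (1 / (2 * H)) * ∫ s in (0:ℝ)..τ, (ΔP s - p))
    (τstar : ℝ) (hτstar : τstar = T_DB + (p - R_E) * T_G / R_G)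
    (hnadir : T_E ≤ τstar) :
    (∀ τ ∈ Set.Ici (0:ℝ), Δf τstar ≤ Δf τ) ∧
    Δf τstar = -(1 / (2 * H)) *
      ((p - R_E) ^ 2 * T_G / (2 * R_G) + (p - R_E) * T_DB + R_E * T_E / 2) :=
  stmt_11_general H T_DB T_G T_E R_G R_E p hH hTDB hTG hTE hRG hRE hp1 hp2 ΔP hΔP Δf hΔf τstar
    hτstar hnadir
end

section
/- (The rotated conic constraint guarantees frequency security for the exact trajectory) Let H, T_DB, T_G, T_E, Δf^max > 0 with T_G > T_E, let R_G > 0, R_E ≥ 0, and let p satisfy R_E ≤ p ≤ R_E + R_G. Define ΔP(τ) := ΔP_G(τ) + ΔP_E(τ) with ΔP_G(τ) = 0 for 0 ≤ τ < T_DB, ΔP_G(τ) = R_G·(τ − T_DB)/T_G for T_DB ≤ τ < T_G + T_DB, ΔP_G(τ) = R_G for τ ≥ T_G + T_DB, ΔP_E(τ) = R_E·τ/T_E for 0 ≤ τ < T_E, ΔP_E(τ) = R_E for τ ≥ T_E, and Δf(τ) := (1/(2H))·∫₀^τ (ΔP(s) − p) ds. Assume T_E ≤ T_DB + (p − R_E)·T_G/R_G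 and that the rotated conic constraint (p − R_E + R_G·T_DB/T_G)² ≤ (4·Δf^max·H − R_E·T_E)·R_G/T_G holds. Then Δf(τ) ≥ −Δf^max for all τ ≥ 0; that is, the conic constraint is a conservative (sufficient) condition for the exact frequency trajectory never to drop below −Δf^max. -/
/-!
The net power `ΔP − p` is the sum of the generator part `ΔP_G − (p − R_E)` and the inverter part
`ΔP_E − R_E`, both nondecreasing. The running integral of a nondecreasing function is smallest
where the function vanishes, so the first part integrates to at least
`−((p − R_E)·T_DB + (p − R_E)²·T_G/(2R_G))` (its value at `T_DB + (p − R_E)·T_G/R_G`) and the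
second to at least `−R_E·T_E/2` (its value at `T_E`). Multiplying the rotated conic constraint by
`T_G/(2R_G)` bounds the sum of these below by `−2H·Δf^max`, with the slack `R_G·T_DB²/(2T_G)`.
-/

open intervalIntegral

theorem Monotone.integral_le_integral_of_apply_eq_zero {f : ℝ → ℝ} (hf : Monotone f) {c : ℝ}
    (hc : f c = 0) (a b : ℝ) : ∫ x in a..c, f x ≤ ∫ x in a..b, f x := by
  rw [← integral_add_adjacent_intervals (b := c) (c := b) hf.intervalIntegrable
    hf.intervalIntegrable, le_add_iff_nonneg_right]
  rcases le_total c b with hcb | hbc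
  · exact integral_nonneg hcb fun x hx => hc ▸ hf hx.1
  · rw [integral_symm, neg_nonneg, ← neg_nonneg, ← intervalIntegral.integral_neg]
    exact integral_nonneg hbc fun x hx => neg_nonneg.2 (hc ▸ hf hx.2)

noncomputable def linearRamp (R T t : ℝ) : ℝ := R / T * max 0 (min T t)

section linearRamp

variable {R T t : ℝ}

theorem linearRamp_of_nonpos (hT : 0 ≤ T) (ht : t ≤ 0) : linearRamp R T t = 0 := by
  rw [linearRamp, min_eq_right (ht.trans hT), max_eq_left ht, mul_zero]

theorem linearRamp_of_mem_Icc (ht : t ∈ Set.Icc 0 T) : linearRamp R T t = R / T * t := by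
  rw [linearRamp, min_eq_right ht.2, max_eq_right ht.1]

theorem linearRamp_of_le (hT : 0 < T) (ht : T ≤ t) : linearRamp R T t = R := by
  rw [linearRamp, min_eq_left ht, max_eq_right hT.le, div_mul_cancel₀ _ hT.ne']

@[fun_prop]
theorem continuous_linearRamp : Continuous (linearRamp R T) := by
  unfold linearRamp; fun_prop

theorem monotone_linearRamp (hR : 0 ≤ R) (hT : 0 ≤ T) : Monotone (linearRamp R T) :=
  fun _ _ h => mul_le_mul_of_nonneg_left (max_le_max_left _ (min_le_min_left _ h))
    (div_nonneg hR hT)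

theorem integral_linearRamp {a : ℝ} (ha : a ≤ 0) (ht : t ∈ Set.Icc 0 T) :
    ∫ x in a..t, linearRamp R T x = R / T * (t ^ 2 / 2) := by
  have hT : 0 ≤ T := ht.1.trans ht.2
  have hint := (continuous_linearRamp (R := R) (T := T)).intervalIntegrable
    (μ := MeasureTheory.volume)
  rw [← integral_add_adjacent_intervals (hint a 0) (hint 0 t),
    integral_congr (g := fun _ => 0) fun x hx => linearRamp_of_nonpos hT ?_,
    integral_congr (g := fun x => R / T * x) fun x hx => linearRamp_of_mem_Icc ?_,
    integral_zero, zero_add, integral_const_mul, integral_id]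
  · ring
  · rw [Set.uIcc_of_le ht.1] at hx; exact ⟨hx.1, hx.2.trans ht.2⟩
  · rw [Set.uIcc_of_le ha] at hx; exact hx.2

theorem mul_div_mem_Icc_of_mem_Icc {A : ℝ} (hR : 0 < R) (hT : 0 ≤ T) (hA : A ∈ Set.Icc 0 R) :
    A * T / R ∈ Set.Icc 0 T :=
  ⟨div_nonneg (mul_nonneg hA.1 hT) hR.le,
    (div_le_iff₀ hR).2 (by rw [mul_comm T]; exact mul_le_mul_of_nonneg_right hA.2 hT)⟩

theorem linearRamp_mul_div_self {A : ℝ} (hR : 0 < R) (hT : 0 < T) (hA : A ∈ Set.Icc 0 R) :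
    linearRamp R T (A * T / R) = A := by
  rw [linearRamp_of_mem_Icc (mul_div_mem_Icc_of_mem_Icc hR hT.le hA)]
  field_simp

theorem integral_linearRamp_sub_self (hT : 0 < T) :
    ∫ x in (0:ℝ)..T, (linearRamp R T x - R) = -(R * T / 2) := by
  rw [integral_sub (continuous_linearRamp.intervalIntegrable _ _) intervalIntegrable_const,
    integral_linearRamp le_rfl ⟨hT.le, le_rfl⟩, integral_const, smul_eq_mul]
  field_simp; ring

theorem integral_delayed_linearRamp_sub {A D : ℝ} (hD : 0 ≤ D) (hR : 0 < R) (hT : 0 < T)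
    (hA : A ∈ Set.Icc 0 R) :
    ∫ x in (0:ℝ)..D + A * T / R, (linearRamp R T (x - D) - A)
      = -(A * D + A ^ 2 * T / (2 * R)) := by
  rw [integral_sub ((by fun_prop : Continuous fun x => linearRamp R T (x - D)).intervalIntegrable
      _ _) intervalIntegrable_const, integral_comp_sub_right (linearRamp R T), zero_sub,
    add_sub_cancel_left,
    integral_linearRamp (neg_nonpos.2 hD) (mul_div_mem_Icc_of_mem_Icc hR hT.le hA),
    integral_const, smul_eq_mul]
  field_simp; ring

theorem ite_deadband_ramp_eq_linearRamp (hT : 0 < T) (D s : ℝ) :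
    (if s < D then 0 else if s < T + D then R * (s - D) / T else R) = linearRamp R T (s - D) := by
  split_ifs with h₁ h₂
  · exact (linearRamp_of_nonpos hT.le (by linarith)).symm
  · rw [linearRamp_of_mem_Icc ⟨by linarith, by linarith⟩, mul_div_right_comm]
  · exact (linearRamp_of_le hT (by linarith)).symm

theorem ite_ramp_eq_linearRamp {s : ℝ} (hT : 0 < T) (hs : 0 ≤ s) :
    (if s < T then R * s / T else R) = linearRamp R T s := by
  split_ifs with h
  · rw [linearRamp_of_mem_Icc ⟨hs, h.le⟩, mul_div_right_comm]
  · exact (linearRamp_of_le hT (not_lt.1 h)).symm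

end linearRamp

theorem nadir_bound_of_rotated_conic {A T_DB T_G R_G R_E T_E H Δf : ℝ} (hTG : 0 < T_G)
    (hRG : 0 < R_G)
    (hconic : (A + R_G * T_DB / T_G) ^ 2 ≤ (4 * Δf * H - R_E * T_E) * R_G / T_G) :
    A * T_DB + A ^ 2 * T_G / (2 * R_G) + R_E * T_E / 2 ≤ 2 * H * Δf := by
  have hexpand : (A + R_G * T_DB / T_G) ^ 2 * (T_G / (2 * R_G))
      = A * T_DB + A ^ 2 * T_G / (2 * R_G) + R_G * T_DB ^ 2 / (2 * T_G) := by
    field_simp; ring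
  have hdeadband : 0 ≤ R_G * T_DB ^ 2 / (2 * T_G) := by positivity
  calc A * T_DB + A ^ 2 * T_G / (2 * R_G) + R_E * T_E / 2
      ≤ (A + R_G * T_DB / T_G) ^ 2 * (T_G / (2 * R_G)) + R_E * T_E / 2 := by
        rw [hexpand]; linarith
    _ ≤ (4 * Δf * H - R_E * T_E) * R_G / T_G * (T_G / (2 * R_G)) + R_E * T_E / 2 := by gcongr
    _ = 2 * H * Δf := by field_simp; ring

theorem stmt_13_general (H T_DB T_G T_E Δfmax R_G R_E p : ℝ)
    (hH : 0 < H) (hTDB : 0 < T_DB) (hTG : 0 < T_G) (hTE : 0 < T_E)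
    (hRG : 0 < R_G) (hRE : 0 ≤ R_E) (hp1 : R_E ≤ p) (hp2 : p ≤ R_E + R_G)
    (ΔP : ℝ → ℝ)
    (hΔP : ∀ τ, ΔP τ =
      (if τ < T_DB then 0
       else if τ < T_G + T_DB then R_G * (τ - T_DB) / T_G
       else R_G)
      + (if τ < T_E then R_E * τ / T_E else R_E))
    (Δf : ℝ → ℝ)
    (hΔf : ∀ τ, Δf τ = (1 / (2 * H)) * ∫ s in (0:ℝ)..τ, (ΔP s - p))
    (hconic : (p - R_E + R_G * T_DB / T_G) ^ 2
        ≤ (4 * Δfmax * H - R_E * T_E) * R_G / T_G) :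
    ∀ τ ∈ Set.Ici (0:ℝ), -Δfmax ≤ Δf τ := by
  intro τ hτ
  set A := p - R_E
  set G : ℝ → ℝ := fun s => linearRamp R_G T_G (s - T_DB) - A
  set E : ℝ → ℝ := fun s => linearRamp R_E T_E s - R_E
  have hA : A ∈ Set.Icc 0 R_G := ⟨sub_nonneg.2 hp1, by linarith⟩
  have hG_mono : Monotone G := fun _ _ h =>
    sub_le_sub_right (monotone_linearRamp hRG.le hTG.le (sub_le_sub_right h _)) _
  have hE_mono : Monotone E := fun _ _ h => sub_le_sub_right (monotone_linearRamp hRE hTE.le h) _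
  have hG_zero : G (T_DB + A * T_G / R_G) = 0 := by
    simp only [G, add_sub_cancel_left, linearRamp_mul_div_self hRG hTG hA, sub_self]
  have hE_zero : E T_E = 0 := by simp only [E, linearRamp_of_le hTE le_rfl, sub_self]
  have hsplit :
      ∫ s in (0:ℝ)..τ, (ΔP s - p) = (∫ s in (0:ℝ)..τ, G s) + ∫ s in (0:ℝ)..τ, E s := by
    rw [← integral_add ((by fun_prop : Continuous G).intervalIntegrable _ _)
      ((by fun_prop : Continuous E).intervalIntegrable _ _)]
    refine integral_congr fun s hs => ?_
    rw [Set.uIcc_of_le hτ] at hs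
    simp only [G, E, A, hΔP, ite_deadband_ramp_eq_linearRamp hTG, ite_ramp_eq_linearRamp hTE hs.1]
    ring
  have hbound : -(2 * H * Δfmax) ≤ ∫ s in (0:ℝ)..τ, (ΔP s - p) := by
    rw [hsplit]
    linarith [hG_mono.integral_le_integral_of_apply_eq_zero hG_zero 0 τ,
      hE_mono.integral_le_integral_of_apply_eq_zero hE_zero 0 τ,
      integral_delayed_linearRamp_sub hTDB.le hRG hTG hA,
      integral_linearRamp_sub_self (R := R_E) hTE,
      nadir_bound_of_rotated_conic hTG hRG hconic]
  rw [hΔf, one_div_mul_eq_div, le_div_iff₀ (by positivity)]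
  linarith

/-- The rotated conic constraint guarantees frequency security for the exact
trajectory: under the linear ramping PFR model with `R_E ≤ p ≤ R_E + R_G` and
`T_E ≤ T_DB + (p − R_E)·T_G/R_G`, if the rotated conic constraint
`(p − R_E + R_G·T_DB/T_G)² ≤ (4·Δf^max·H − R_E·T_E)·R_G/T_G` holds, then the exact
frequency deviation trajectory never drops below `−Δf^max`. -/
theorem stmt_13 (H T_DB T_G T_E Δfmax R_G R_E p : ℝ)
    (hH : 0 < H) (hTDB : 0 < T_DB) (hTG : 0 < T_G) (hTE : 0 < T_E) (hΔfmax : 0 < Δfmax)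
    (hTGE : T_E < T_G)
    (hRG : 0 < R_G) (hRE : 0 ≤ R_E) (hp1 : R_E ≤ p) (hp2 : p ≤ R_E + R_G)
    (ΔP : ℝ → ℝ)
    (hΔP : ∀ τ, ΔP τ =
      (if τ < T_DB then 0
       else if τ < T_G + T_DB then R_G * (τ - T_DB) / T_G
       else R_G)
      + (if τ < T_E then R_E * τ / T_E else R_E))
    (Δf : ℝ → ℝ)
    (hΔf : ∀ τ, Δf τ = (1 / (2 * H)) * ∫ s in (0:ℝ)..τ, (ΔP s - p))
    (hnadir : T_E ≤ T_DB + (p - R_E) * T_G / R_G)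
    (hconic : (p - R_E + R_G * T_DB / T_G) ^ 2
        ≤ (4 * Δfmax * H - R_E * T_E) * R_G / T_G) :
    ∀ τ ∈ Set.Ici (0:ℝ), -Δfmax ≤ Δf τ :=
  stmt_13_general H T_DB T_G T_E Δfmax R_G R_E p hH hTDB hTG hTE hRG hRE hp1 hp2 ΔP hΔP Δf hΔf
    hconic
end
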